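/- arXiv:2312.08013 — 4 statements merged into one kernel-verified Lean document; each statement's English description precedes it below -/
import Mathlib

section
/- In a finite T₀ topological space, identified with its specialization poset via x ≤ y iff x ∈ cl{y}, a subset A is locally closed (i.e., cl(A) \ A is closed) if and only if A is convex with respect to the specialization order (that is, x ≤ y ≤ z with x, z ∈ A implies y ∈ A). -/
/-!
In an Alexandrov-discrete space (e.g. a finite one) closures are unions of point closures, so a
set is closed exactly when it is a down-set for the specialization order `x ∈ closure {y}`.
Applied to `closure A \ A`: a point `x` below some `y ∈ closure A \ A` lies in `closure A`
anyway, so closedness only asks that `x ∉ A`; as `y` is itself below some `z ∈ A`, this is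
order-convexity of `A`.
-/

open Set

section AlexandrovDiscrete

variable {X : Type*} [TopologicalSpace X] [AlexandrovDiscrete X] {s : Set X} {x : X}

lemma mem_closure_iff_exists_mem_closure_singleton :
    x ∈ closure s ↔ ∃ y ∈ s, x ∈ closure {y} := by
  conv_lhs => rw [← biUnion_of_singleton s, biUnion_eq_iUnion, closure_iUnion]
  simp

lemma isClosed_iff_forall_mem_closure_singleton :
    IsClosed s ↔ ∀ x y, x ∈ closure {y} → y ∈ s → x ∈ s := by
  refine ⟨fun hs x y hxy hy ↦ closure_minimal (singleton_subset_iff.2 hy) hs hxy, fun h ↦ ?_⟩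
  refine closure_subset_iff_isClosed.1 fun x hx ↦ ?_
  obtain ⟨y, hy, hxy⟩ := mem_closure_iff_exists_mem_closure_singleton.1 hx
  exact h x y hxy hy

theorem isClosed_closure_diff_iff_forall_mem_closure_singleton :
    IsClosed (closure s \ s) ↔
      ∀ x y z, x ∈ closure {y} → y ∈ closure {z} → x ∈ s → z ∈ s → y ∈ s := by
  rw [isClosed_iff_forall_mem_closure_singleton]
  constructor
  · intro h x y z hxy hyz hx hz
    by_contra hy
    exact (h x y hxy ⟨mem_closure_iff_exists_mem_closure_singleton.2 ⟨z, hz, hyz⟩, hy⟩).2 hx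
  · rintro h x y hxy ⟨hys, hy⟩
    obtain ⟨z, hz, hyz⟩ := mem_closure_iff_exists_mem_closure_singleton.1 hys
    exact ⟨closure_minimal (singleton_subset_iff.2 hys) isClosed_closure hxy,
      fun hx ↦ hy (h x y z hxy hyz hx hz)⟩

end AlexandrovDiscrete

theorem stmt_3_general {X : Type*} [TopologicalSpace X] [Finite X] (A : Set X) :
    IsClosed (closure A \ A) ↔
      ∀ x y z : X, x ∈ closure {y} → y ∈ closure {z} → x ∈ A → z ∈ A → y ∈ A :=
  isClosed_closure_diff_iff_forall_mem_closure_singleton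

/-- In a finite T₀ space with specialization order `x ≤ y ↔ x ∈ cl {y}`, a set `A` is
locally closed (`cl A \ A` closed) iff `A` is convex with respect to this order. -/
theorem stmt_3 {X : Type*} [TopologicalSpace X] [Finite X] [T0Space X] (A : Set X) :
    IsClosed (closure A \ A) ↔
      ∀ x y z : X, x ∈ closure {y} → y ∈ closure {z} → x ∈ A → z ∈ A → y ∈ A :=
  stmt_3_general A
end

section
/- Let φ be a flow on a compact metric space X, N ⊆ X a compact set, and γ a full solution that wades through N in plus infinity (there exist sequences t⁻ₙ, t⁺ₙ → ∞ with t⁺ₙ − t⁻ₙ → ∞ and γ([t⁻ₙ, t⁺ₙ]) ⊆ N). Then the intersection of Inv(N) with the omega limit set ω(γ) is non-empty, where Inv(N) is the maximal invariant subset of N. -/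
/-- If a full solution `γ` of a flow on a compact metric space wades through a compact set
`N` in plus infinity, then `Inv N ∩ ω(γ)` is non-empty. -/
theorem stmt_10 {X : Type*} [MetricSpace X] [CompactSpace X]
    (φ : X → ℝ → X) (hcont : Continuous fun p : X × ℝ => φ p.1 p.2)
    (hφ0 : ∀ x, φ x 0 = x) (hφadd : ∀ x s t, φ (φ x s) t = φ x (s + t))
    (γ : ℝ → X) (hγ : ∀ s t, γ (s + t) = φ (γ s) t)
    (N : Set X) (hN : IsCompact N)
    (tm tp : ℕ → ℝ)
    (htm : Filter.Tendsto tm Filter.atTop Filter.atTop)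
    (htp : Filter.Tendsto tp Filter.atTop Filter.atTop)
    (hdiff : Filter.Tendsto (fun n => tp n - tm n) Filter.atTop Filter.atTop)
    (hwade : ∀ n, ∀ t ∈ Set.Icc (tm n) (tp n), γ t ∈ N) :
    ({x ∈ N | ∀ t : ℝ, φ x t ∈ N} ∩
      ⋂ t ∈ Set.Ioi (0 : ℝ), closure (γ '' Set.Ici t)).Nonempty := by
  set m : ℕ → ℝ := fun n => tm n + (tp n - tm n) / 2 with hm
  have hd2 : Filter.Tendsto (fun n => (tp n - tm n) / 2) Filter.atTop Filter.atTop :=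
    hdiff.atTop_div_const (by norm_num)
  have hmtop : Filter.Tendsto m Filter.atTop Filter.atTop := Filter.Tendsto.atTop_add_atTop htm hd2
  have hmem : ∀ t : ℝ, ∀ᶠ n in Filter.atTop, γ (m n + t) ∈ N := by
    intro t
    filter_upwards [hd2.eventually_ge_atTop |t|] with n hn
    apply hwade n
    have h1 : -|t| ≤ t := neg_abs_le t
    have h2 : t ≤ |t| := le_abs_self t
    constructor
    · simp only [hm]; linarith
    · simp only [hm]; linarith
  obtain ⟨x, -, ψ, hψ, hx⟩ :=
    isCompact_univ.tendsto_subseq (fun n => (Set.mem_univ (γ (m n))))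
  have hψtop : Filter.Tendsto ψ Filter.atTop Filter.atTop := hψ.tendsto_atTop
  have hxN : ∀ t : ℝ, φ x t ∈ N := by
    intro t
    have hc : Continuous fun y => φ y t :=
      hcont.comp (continuous_id.prodMk continuous_const)
    have hlim : Filter.Tendsto (fun k => γ (m (ψ k) + t)) Filter.atTop (nhds (φ x t)) := by
      have := (hc.continuousAt (x := x)).tendsto.comp hx
      simpa [Function.comp_def, hγ] using this
    exact hN.isClosed.mem_of_tendsto hlim (hψtop.eventually (hmem t))
  refine ⟨x, ⟨⟨?_, hxN⟩, ?_⟩⟩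
  · have := hxN 0
    rwa [hφ0] at this
  · simp only [Set.mem_iInter]
    intro t _
    refine mem_closure_of_tendsto hx ?_
    filter_upwards [(hmtop.comp hψtop).eventually_ge_atTop t] with k hk
    exact ⟨m (ψ k), hk, rfl⟩
end

section
/- Conversely, if {M_p : p ∈ P} is a finite indexed family of mutually disjoint closed invariant subsets of a compact invariant set S such that every non-empty closed invariant subset T ⊆ S intersects ⋃_p M_p, then {M_p} is a Morse predecomposition of S: every full solution γ in S satisfies α(γ) ∩ M_p ≠ ∅ and ω(γ) ∩ M_q ≠ ∅ for some p, q. -/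
open Set

/-- Helper: the omega limit set of a full solution in `S` meets some `M q`. -/
lemma omega_meets_aux {X : Type*} [MetricSpace X]
    (φ : X → ℝ → X) (hcont : Continuous fun p : X × ℝ => φ p.1 p.2)
    (S : Set X) (hScomp : IsCompact S)
    {P : Type*} (M : P → Set X)
    (hmeets : ∀ T : Set X, T ⊆ S → IsClosed T → T.Nonempty →
      (∀ x ∈ T, ∀ t : ℝ, φ x t ∈ T) → (T ∩ ⋃ p, M p).Nonempty)
    (γ : ℝ → X) (hγS : ∀ t, γ t ∈ S) (hγ : ∀ s t, γ (s + t) = φ (γ s) t) :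
    ∃ q, ((⋂ t ∈ Set.Ioi (0 : ℝ), closure (γ '' Set.Ici t)) ∩ M q).Nonempty := by
  set Ω := ⋂ t ∈ Set.Ioi (0 : ℝ), closure (γ '' Set.Ici t) with hΩdef
  have himg : ∀ t : ℝ, γ '' Set.Ici t ⊆ S := by
    rintro t x ⟨u, _, rfl⟩; exact hγS u
  have hclS : ∀ t : ℝ, closure (γ '' Set.Ici t) ⊆ S := fun t =>
    closure_minimal (himg t) hScomp.isClosed
  have hΩS : Ω ⊆ S := by
    intro x hx
    exact hclS 1 (by simpa using (Set.mem_iInter₂.mp hx 1 (by norm_num)))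
  have hΩcl : IsClosed Ω := isClosed_biInter fun t _ => isClosed_closure
  -- nonempty
  have hΩne : Ω.Nonempty := by
    have : (⋂ t : Set.Ioi (0 : ℝ), closure (γ '' Set.Ici (t : ℝ))).Nonempty := by
      apply IsCompact.nonempty_iInter_of_directed_nonempty_isCompact_isClosed
      · intro s t
        refine ⟨⟨max s t, Set.mem_Ioi.mpr (lt_max_of_lt_left s.2)⟩, ?_, ?_⟩
        · exact closure_mono (Set.image_mono (Set.Ici_subset_Ici.mpr (le_max_left _ _)))
        · exact closure_mono (Set.image_mono (Set.Ici_subset_Ici.mpr (le_max_right _ _)))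
      · intro t
        exact ⟨γ t, subset_closure ⟨t, Set.self_mem_Ici, rfl⟩⟩
      · intro t
        exact hScomp.of_isClosed_subset isClosed_closure (hclS t)
      · intro t; exact isClosed_closure
    rw [hΩdef, Set.biInter_eq_iInter]
    exact this
  -- invariant
  have hΩinv : ∀ x ∈ Ω, ∀ t : ℝ, φ x t ∈ Ω := by
    intro x hx t
    rw [hΩdef, Set.mem_iInter₂]
    intro s hs
    set s0 : ℝ := max (s - t) 1 with hs0
    have hx0 : x ∈ closure (γ '' Set.Ici s0) :=
      Set.mem_iInter₂.mp hx s0 (by rw [hs0]; exact Set.mem_Ioi.mpr (lt_of_lt_of_le one_pos (le_max_right _ _)))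
    have hf : Continuous fun y => φ y t :=
      hcont.comp (continuous_id.prodMk continuous_const)
    have h1 : φ x t ∈ closure ((fun y => φ y t) '' (γ '' Set.Ici s0)) :=
      (image_closure_subset_closure_image hf) ⟨x, hx0, rfl⟩
    refine closure_mono ?_ h1
    rintro _ ⟨_, ⟨u, hu, rfl⟩, rfl⟩
    refine ⟨u + t, ?_, ?_⟩
    · have h2 : s0 ≤ u := hu
      have h3 : s - t ≤ s0 := le_max_left _ _
      simp only [Set.mem_Ici]
      linarith
    · exact hγ u t
  obtain ⟨x, hxΩ, hxU⟩ := hmeets Ω hΩS hΩcl hΩne hΩinv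
  obtain ⟨q, hq⟩ := Set.mem_iUnion.mp hxU
  exact ⟨q, x, hxΩ, hq⟩

/-- Conversely: if `{M p}` is a finite family of mutually disjoint closed invariant
subsets of a compact invariant set `S` such that every non-empty closed invariant
`T ⊆ S` meets `⋃ p, M p`, then `{M p}` is a Morse predecomposition: every full solution
in `S` is a link between members of the family. -/
theorem stmt_13 {X : Type*} [MetricSpace X] [LocallyCompactSpace X]
    (φ : X → ℝ → X) (hcont : Continuous fun p : X × ℝ => φ p.1 p.2)
    (hφ0 : ∀ x, φ x 0 = x) (hφadd : ∀ x s t, φ (φ x s) t = φ x (s + t))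
    (S : Set X) (hScomp : IsCompact S) (hSne : S.Nonempty)
    (hSinv : ∀ x ∈ S, ∀ t : ℝ, φ x t ∈ S)
    {P : Type*} [Finite P] (M : P → Set X)
    (hMS : ∀ p, M p ⊆ S) (hMclosed : ∀ p, IsClosed (M p))
    (hMinv : ∀ p, ∀ x ∈ M p, ∀ t : ℝ, φ x t ∈ M p)
    (hMdisj : ∀ p q, p ≠ q → Disjoint (M p) (M q))
    (hmeets : ∀ T : Set X, T ⊆ S → IsClosed T → T.Nonempty →
      (∀ x ∈ T, ∀ t : ℝ, φ x t ∈ T) → (T ∩ ⋃ p, M p).Nonempty) :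
    ∀ γ : ℝ → X, (∀ t, γ t ∈ S) → (∀ s t, γ (s + t) = φ (γ s) t) →
      ∃ p q, ((⋂ t ∈ Set.Iio (0 : ℝ), closure (γ '' Set.Iic t)) ∩ M p).Nonempty ∧
             ((⋂ t ∈ Set.Ioi (0 : ℝ), closure (γ '' Set.Ici t)) ∩ M q).Nonempty := by
  intro γ hγS hγ
  -- omega part
  obtain ⟨q, hq⟩ := omega_meets_aux φ hcont S hScomp M hmeets γ hγS hγ
  -- alpha part via time reversal
  set ψ : X → ℝ → X := fun x t => φ x (-t) with hψ
  have hψcont : Continuous fun p : X × ℝ => ψ p.1 p.2 :=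
    hcont.comp (continuous_fst.prodMk continuous_snd.neg)
  have hψmeets : ∀ T : Set X, T ⊆ S → IsClosed T → T.Nonempty →
      (∀ x ∈ T, ∀ t : ℝ, ψ x t ∈ T) → (T ∩ ⋃ p, M p).Nonempty := by
    intro T hTS hTcl hTne hTinv
    exact hmeets T hTS hTcl hTne fun x hx t => by simpa only [hψ, neg_neg] using hTinv x hx (-t)
  set γ' : ℝ → X := fun u => γ (-u) with hγ'
  have hγ'S : ∀ t, γ' t ∈ S := fun t => hγS (-t)
  have hγ'sol : ∀ s t, γ' (s + t) = ψ (γ' s) t := by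
    intro s t
    show γ (-(s + t)) = φ (γ (-s)) (-t)
    rw [neg_add]
    exact hγ (-s) (-t)
  obtain ⟨p, hp⟩ := omega_meets_aux ψ hψcont S hScomp M hψmeets γ' hγ'S hγ'sol
  refine ⟨p, q, ?_, hq⟩
  -- identify the alpha set of γ with the omega set of γ'
  have hset : (⋂ t ∈ Set.Iio (0 : ℝ), closure (γ '' Set.Iic t)) =
      ⋂ t ∈ Set.Ioi (0 : ℝ), closure (γ' '' Set.Ici t) := by
    have himg : ∀ t : ℝ, γ' '' Set.Ici t = γ '' Set.Iic (-t) := by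
      intro t
      ext x
      constructor
      · rintro ⟨u, hu, rfl⟩; exact ⟨-u, by simpa using hu, rfl⟩
      · rintro ⟨u, hu, rfl⟩
        refine ⟨-u, Set.mem_Ici.mpr ?_, by simp [hγ']⟩
        have := Set.mem_Iic.mp hu
        linarith
    ext x
    simp only [Set.mem_iInter₂, Set.mem_Iio, Set.mem_Ioi]
    constructor
    · intro h t ht
      rw [himg]
      exact h (-t) (by linarith)
    · intro h t ht
      have := h (-t) (by linarith)
      rwa [himg, neg_neg] at this
  rwa [hset]
end

section
/- Let S be a compact connected invariant chain recurrent set of a flow on a compact metric space and let A be a non-empty isolated invariant subset of S with A ≠ S. If A is neither an attractor nor a repeller in S, then there exist points x, y in S \ A with α(x) ⊆ A and ω(y) ⊆ A. -/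
/-!
Let `N` be an isolating neighbourhood of `A` in `S`. If no point of `N \ A` had its whole
backward orbit in `N`, every point of the compact set `N \ U` would leave `N` in backward
time, uniformly within some time `T`. An `S`-orbit starting close enough to `A` stays in `U`
for time `T`, so when it first leaves `U` it would do so at a point of `N \ U` whose past of
length `T` lies in `N`, which is impossible; hence forward `S`-orbits near `A` stay in `N`, and
their ω-limit is the maximal invariant set `A` of `N`: `A` would be an attractor. So some
`x ∈ N \ A` has backward orbit in `N`, whence `α(x) ⊆ A`; reversing time gives `y`.
-/

open Set Filter Topology

theorem Filter.HasBasis.omegaLimit_eq {τ α β ι : Type*} [TopologicalSpace β]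
    {f : Filter τ} {p : ι → Prop} {s : ι → Set τ} (h : f.HasBasis p s) (ϕ : τ → α → β)
    (W : Set α) :
    omegaLimit f ϕ W = ⋂ i, ⋂ (_ : p i), closure (⋃ x ∈ W, (ϕ · x) '' s i) := by
  simp only [iUnion_image_right]
  refine Subset.antisymm (iInter₂_mono' fun i hi => ⟨s i, h.mem_of_mem hi, subset_rfl⟩) ?_
  refine iInter₂_mono' fun u hu => ?_
  obtain ⟨i, hi, hsu⟩ := h.mem_iff.1 hu
  exact ⟨i, hi, closure_mono (image2_subset hsu subset_rfl)⟩

theorem Real.atTop_hasBasis_pos_Ici : (atTop : Filter ℝ).HasBasis (0 < ·) Ici :=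
  (atTop_basis_Ioi' 0).to_hasBasis
    (fun t ht => ⟨t + 1, by linarith, Ici_subset_Ioi.2 (by linarith)⟩)
    fun t ht => ⟨t, ht, Ioi_subset_Ici_self⟩

theorem Real.atBot_hasBasis_neg_Iic : (atBot : Filter ℝ).HasBasis (· < 0) Iic :=
  (atBot_basis_Iio' 0).to_hasBasis
    (fun t ht => ⟨t - 1, by linarith, Iic_subset_Iio.2 (by linarith)⟩)
    fun t ht => ⟨t, ht, Iio_subset_Iic_self⟩

namespace Flow

variable {X : Type*} [TopologicalSpace X] (Φ : Flow ℝ X)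

def maxInvariant (N : Set X) : Set X := {x ∈ N | ∀ t, Φ t x ∈ N}

theorem isInvariant_maxInvariant (N : Set X) : IsInvariant Φ (Φ.maxInvariant N) :=
  fun t _ hx => ⟨hx.2 t, fun s => by rw [← map_add]; exact hx.2 _⟩

theorem maxInvariant_reverse (N : Set X) : Φ.reverse.maxInvariant N = Φ.maxInvariant N := by
  ext x
  exact and_congr_right fun _ => (neg_surjective.forall (p := fun t => Φ t x ∈ N)).symm

theorem isInvariant_reverse {S : Set X} (hS : IsInvariant Φ S) : IsInvariant Φ.reverse S :=
  fun t => hS (-t)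

theorem omegaLimit_atBot_eq_reverse (W : Set X) :
    omegaLimit atBot Φ W = omegaLimit atTop Φ.reverse W := by
  refine Subset.antisymm ?_ (omegaLimit_subset_of_tendsto Φ W tendsto_neg_atTop_atBot)
  simpa only [reverse_apply, neg_neg] using
    omegaLimit_subset_of_tendsto Φ.reverse W tendsto_neg_atBot_atTop

theorem omegaLimit_subset_maxInvariant {N W : Set X} (hN : IsClosed N)
    (hW : ∀ x ∈ W, ∀ t ≥ 0, Φ t x ∈ N) :
    omegaLimit atTop Φ W ⊆ Φ.maxInvariant N := by
  have hωN : omegaLimit atTop Φ W ⊆ N :=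
    (omegaLimit_subset_closure_image2 _ _ _ (Ici_mem_atTop 0)).trans
      (closure_minimal (image2_subset_iff.2 fun t ht x hx => hW x hx t ht) hN)
  have hinv : IsInvariant Φ (omegaLimit atTop Φ W) :=
    Φ.isInvariant_omegaLimit _ _ fun t => tendsto_atTop_add_const_left _ t tendsto_id
  exact fun z hz => ⟨hωN hz, fun t => hωN (hinv t hz)⟩

theorem subset_omegaLimit_of_isInvariant {A W : Set X} (hA : IsInvariant Φ A) (hAW : A ⊆ W) :
    A ⊆ omegaLimit atTop Φ W := by
  intro a ha
  refine mem_iInter₂.2 fun u hu => subset_closure ?_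
  obtain ⟨t, ht⟩ := Filter.nonempty_of_mem hu
  exact ⟨t, ht, Φ (-t) a, hAW (hA (-t) ha),
    by rw [← map_add, add_neg_cancel, map_zero_apply]⟩

theorem isOpen_setOf_forall_apply_mem {K : Set ℝ} {U : Set X} (hK : IsCompact K)
    (hU : IsOpen U) :
    IsOpen {x | ∀ t ∈ K, Φ t x ∈ U} :=
  isOpen_iff_mem_nhds.2 fun _ hx => hK.eventually_forall_of_forall_eventually fun t ht =>
    (hU.preimage (Φ.continuous continuous_snd continuous_fst)).mem_nhds (hx t ht)

theorem exists_forall_Icc_apply_notMem {N K : Set X} (hN : IsClosed N) (hK : IsCompact K)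
    (h : ∀ x ∈ K, ∃ t ≤ 0, Φ t x ∉ N) :
    ∃ T ≥ 0, ∀ x ∈ K, ∃ t ∈ Icc (-T) 0, Φ t x ∉ N := by
  let O : ℕ → Set X := fun n => ⋃ t ∈ Icc (-(n : ℝ)) 0, Φ t ⁻¹' Nᶜ
  have hO : ∀ n, IsOpen (O n) := fun n => isOpen_biUnion fun t _ =>
    hN.isOpen_compl.preimage (Φ.continuous continuous_const continuous_id)
  have hmono : Monotone O := fun m n hmn =>
    biUnion_mono (Icc_subset_Icc_left (by simpa using hmn)) fun _ _ => subset_rfl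
  have hcover : K ⊆ ⋃ n, O n := fun x hx => by
    obtain ⟨t, ht, hxt⟩ := h x hx
    obtain ⟨n, hn⟩ := exists_nat_ge (-t)
    exact mem_iUnion.2 ⟨n, mem_biUnion ⟨by linarith, ht⟩ hxt⟩
  obtain ⟨n, hn⟩ := hK.elim_directed_cover O hO hcover hmono.directed_le
  refine ⟨n, n.cast_nonneg, fun x hx => ?_⟩
  simpa [O] using hn hx

theorem exists_isOpen_forall_nonneg_apply_mem {S N U A : Set X} (hS : IsInvariant Φ S)
    (hN : IsClosed N) (hU : IsOpen U) (hUSN : U ∩ S ⊆ N) (hNU : IsCompact (N \ U))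
    (hA : IsInvariant Φ A) (hAU : A ⊆ U) (hexit : ∀ x ∈ N \ U, ∃ t ≤ 0, Φ t x ∉ N) :
    ∃ V, IsOpen V ∧ A ⊆ V ∧ ∀ x ∈ V ∩ S, ∀ t ≥ 0, Φ t x ∈ U := by
  obtain ⟨T, hT0, hT⟩ := Φ.exists_forall_Icc_apply_notMem hN hNU hexit
  refine ⟨{x | ∀ t ∈ Icc 0 T, Φ t x ∈ U},
    Φ.isOpen_setOf_forall_apply_mem isCompact_Icc hU, fun a ha t _ => hAU (hA t ha), ?_⟩
  rintro x ⟨hxV, hxS⟩ t ht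
  by_contra hxt
  have hcont : Continuous (Φ · x) := Φ.continuous continuous_id continuous_const
  -- `sInf E` is the first time the orbit of `x` leaves `U`
  let E := {s | 0 ≤ s ∧ Φ s x ∉ U}
  have hE : IsClosed E := isClosed_Ici.inter (hU.isClosed_compl.preimage hcont)
  have hEbdd : BddBelow E := ⟨0, fun _ hs => hs.1⟩
  obtain ⟨hs0, hsU⟩ : sInf E ∈ E := hE.csInf_mem ⟨t, ht, hxt⟩ hEbdd
  have hTs : T < sInf E := lt_of_not_ge fun h => hsU (hxV _ ⟨hs0, h⟩)
  have hbefore : MapsTo (Φ · x) (Ico 0 (sInf E)) N := fun r hr =>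
    hUSN ⟨by_contra fun h => hr.2.not_ge (csInf_le hEbdd ⟨hr.1, h⟩), hS r hxS⟩
  have hupto : MapsTo (Φ · x) (Icc 0 (sInf E)) N := by
    simpa [closure_Ico (hT0.trans_lt hTs).ne, hN.closure_eq] using hbefore.closure hcont
  obtain ⟨r, hr, hrN⟩ := hT _ ⟨hupto ⟨hs0, le_rfl⟩, hsU⟩
  rw [← map_add] at hrN
  exact hrN (hupto ⟨by linarith [hr.1], by linarith [hr.2]⟩)

theorem exists_omegaLimit_eq_of_isolating [T2Space X] {S N U A : Set X}
    (hS : IsInvariant Φ S) (hNS : N ⊆ S) (hN : IsCompact N) (hU : IsOpen U)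
    (hAN : A = Φ.maxInvariant N) (hAU : A ⊆ U) (hUSN : U ∩ S ⊆ N)
    (hback : ∀ x ∈ N, (∀ t ≤ 0, Φ t x ∈ N) → x ∈ A) :
    ∃ V, IsOpen V ∧ A ⊆ V ∧ omegaLimit atTop Φ (V ∩ S) = A := by
  subst hAN
  have hA := Φ.isInvariant_maxInvariant N
  obtain ⟨V, hV, hAV, hfwd⟩ := Φ.exists_isOpen_forall_nonneg_apply_mem hS hN.isClosed hU hUSN
    (hN.diff hU) hA hAU fun x hx => by
      by_contra! h
      exact hx.2 (hAU (hback x hx.1 h))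
  refine ⟨V, hV, hAV, Subset.antisymm ?_ ?_⟩
  · exact Φ.omegaLimit_subset_maxInvariant hN.isClosed fun x hx t ht =>
      hUSN ⟨hfwd x hx t ht, hS t hx.2⟩
  · exact Φ.subset_omegaLimit_of_isInvariant hA fun a ha => ⟨hAV ha, hNS ha.1⟩

end Flow

theorem stmt_18_general {X : Type*} [MetricSpace X] [CompactSpace X]
    (φ : X → ℝ → X) (hcont : Continuous fun p : X × ℝ => φ p.1 p.2)
    (hφ0 : ∀ x, φ x 0 = x) (hφadd : ∀ x s t, φ (φ x s) t = φ x (s + t))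
    (S : Set X)
    (hSinv : ∀ x ∈ S, ∀ t : ℝ, φ x t ∈ S)
    (A : Set X)
    -- A is an isolated invariant set in S
    (hAiso : ∃ N U : Set X, N ⊆ S ∧ IsCompact N ∧ IsOpen U ∧ A ⊆ U ∧ U ∩ S ⊆ N ∧
      A = {x ∈ N | ∀ t : ℝ, φ x t ∈ N})
    -- A is not an attractor in S
    (hnotattr : ¬ ∃ U : Set X, IsOpen U ∧ A ⊆ U ∧
      (⋂ t ∈ Set.Ioi (0 : ℝ), closure (⋃ x ∈ U ∩ S, φ x '' Set.Ici t)) = A)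
    -- A is not a repeller in S
    (hnotrep : ¬ ∃ U : Set X, IsOpen U ∧ A ⊆ U ∧
      (⋂ t ∈ Set.Iio (0 : ℝ), closure (⋃ x ∈ U ∩ S, φ x '' Set.Iic t)) = A) :
    (∃ x ∈ S \ A, (⋂ t ∈ Set.Iio (0 : ℝ), closure (φ x '' Set.Iic t)) ⊆ A) ∧
    (∃ y ∈ S \ A, (⋂ t ∈ Set.Ioi (0 : ℝ), closure (φ y '' Set.Ici t)) ⊆ A) := by
  obtain ⟨N, U, hNS, hN, hU, hAU, hUSN, hA⟩ := hAiso
  let Φ : Flow ℝ X :=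
    { toFun := fun t x => φ x t
      cont' := hcont.comp continuous_swap
      map_add' := fun t₁ t₂ x => by rw [hφadd, add_comm]
      map_zero' := hφ0 }
  have hS : IsInvariant Φ S := fun t x hx => hSinv x hx t
  have hω (W : Set X) : ⋂ t ∈ Ioi (0 : ℝ), closure (⋃ x ∈ W, φ x '' Ici t) =
      omegaLimit atTop Φ W :=
    (Real.atTop_hasBasis_pos_Ici.omegaLimit_eq Φ W).symm
  have hα (W : Set X) : ⋂ t ∈ Iio (0 : ℝ), closure (⋃ x ∈ W, φ x '' Iic t) =
      omegaLimit atTop Φ.reverse W :=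
    (Real.atBot_hasBasis_neg_Iic.omegaLimit_eq Φ W).symm.trans
      (Φ.omegaLimit_atBot_eq_reverse W)
  obtain ⟨x, hxN, hxback, hxA⟩ : ∃ x ∈ N, (∀ t ≤ 0, Φ t x ∈ N) ∧ x ∉ A := by
    by_contra! h
    obtain ⟨V, hV, hAV, hVω⟩ :=
      Φ.exists_omegaLimit_eq_of_isolating hS hNS hN hU hA hAU hUSN h
    exact hnotattr ⟨V, hV, hAV, (hω _).trans hVω⟩
  obtain ⟨y, hyN, hyfwd, hyA⟩ : ∃ y ∈ N, (∀ t ≤ 0, Φ.reverse t y ∈ N) ∧ y ∉ A := by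
    by_contra! h
    obtain ⟨V, hV, hAV, hVω⟩ := Φ.reverse.exists_omegaLimit_eq_of_isolating
      (Φ.isInvariant_reverse hS) hNS hN hU (hA.trans (Φ.maxInvariant_reverse N).symm) hAU
      hUSN h
    exact hnotrep ⟨V, hV, hAV, (hα _).trans hVω⟩
  refine ⟨⟨x, ⟨hNS hxN, hxA⟩, ?_⟩, ⟨y, ⟨hNS hyN, hyA⟩, ?_⟩⟩
  · have hαx := hα {x}
    simp only [biUnion_singleton] at hαx
    rw [hαx, hA]
    refine (Φ.reverse.omegaLimit_subset_maxInvariant hN.isClosed ?_).trans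
      (Φ.maxInvariant_reverse N).subset
    rintro _ rfl t ht
    exact hxback (-t) (by linarith)
  · have hωy := hω {y}
    simp only [biUnion_singleton] at hωy
    rw [hωy, hA]
    refine Φ.omegaLimit_subset_maxInvariant hN.isClosed ?_
    rintro _ rfl t ht
    simpa using hyfwd (-t) (by linarith)

/-- Let `S` be a compact, connected, invariant, chain recurrent set of a flow on a compact
metric space and `A ⊊ S` a non-empty isolated invariant subset of `S`. If `A` is neither
an attractor nor a repeller in `S`, then there exist `x, y ∈ S \ A` with `α(x) ⊆ A` and
`ω(y) ⊆ A`. -/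
theorem stmt_18 {X : Type*} [MetricSpace X] [CompactSpace X]
    (φ : X → ℝ → X) (hcont : Continuous fun p : X × ℝ => φ p.1 p.2)
    (hφ0 : ∀ x, φ x 0 = x) (hφadd : ∀ x s t, φ (φ x s) t = φ x (s + t))
    (S : Set X) (hScomp : IsCompact S) (hSconn : IsConnected S)
    (hSinv : ∀ x ∈ S, ∀ t : ℝ, φ x t ∈ S)
    -- chain recurrence of S
    (hchain : ∀ x ∈ S, ∀ 𝒰 : Set (Set X), (∀ U ∈ 𝒰, IsOpen U) → S ⊆ ⋃₀ 𝒰 →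
      ∀ T > (0 : ℝ), ∃ (n : ℕ) (xs : ℕ → X) (ts : ℕ → ℝ) (Us : ℕ → Set X),
        0 < n ∧ xs 0 = x ∧ xs n = x ∧ (∃ i ≤ n, xs i ≠ x) ∧
        ∀ i, 1 ≤ i → i ≤ n →
          Us i ∈ 𝒰 ∧ T ≤ ts i ∧ xs i ∈ Us i ∧ φ (xs (i - 1)) (ts i) ∈ Us i)
    (A : Set X) (hAS : A ⊆ S) (hAne : A.Nonempty) (hAneq : A ≠ S)
    -- A is an isolated invariant set in S
    (hAiso : ∃ N U : Set X, N ⊆ S ∧ IsCompact N ∧ IsOpen U ∧ A ⊆ U ∧ U ∩ S ⊆ N ∧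
      A = {x ∈ N | ∀ t : ℝ, φ x t ∈ N})
    -- A is not an attractor in S
    (hnotattr : ¬ ∃ U : Set X, IsOpen U ∧ A ⊆ U ∧
      (⋂ t ∈ Set.Ioi (0 : ℝ), closure (⋃ x ∈ U ∩ S, φ x '' Set.Ici t)) = A)
    -- A is not a repeller in S
    (hnotrep : ¬ ∃ U : Set X, IsOpen U ∧ A ⊆ U ∧
      (⋂ t ∈ Set.Iio (0 : ℝ), closure (⋃ x ∈ U ∩ S, φ x '' Set.Iic t)) = A) :
    (∃ x ∈ S \ A, (⋂ t ∈ Set.Iio (0 : ℝ), closure (φ x '' Set.Iic t)) ⊆ A) ∧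
    (∃ y ∈ S \ A, (⋂ t ∈ Set.Ioi (0 : ℝ), closure (φ y '' Set.Ici t)) ⊆ A) :=
  stmt_18_general φ hcont hφ0 hφadd S hSinv A hAiso hnotattr hnotrep
end
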